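/- arXiv:1309.7584 — 4 statements merged into one kernel-verified Lean document; each statement's English description precedes it below -/
import Mathlib

section
/- Let G be a context-free grammar. The grammar admits a left-recursive derivation A ⇒+ Aβ for some nonterminal A if and only if the directed graph whose nodes are the nonterminals and which has an edge from A to B whenever there is a rule A → A₁…AₖBγ with all A₁,…,Aₖ nullable (k ≥ 0) contains a cycle. -/
/-- One derivation step of a context-free grammar given by a rule predicate `P`. -/
inductive CFStep {T N : Type} (P : N → List (T ⊕ N) → Prop) :
    List (T ⊕ N) → List (T ⊕ N) → Prop
  | mk (u v α : List (T ⊕ N)) (A : N) (h : P A α) :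
      CFStep P (u ++ Sum.inr A :: v) (u ++ α ++ v)

/-- Multi-step derivation. -/
def Derives {T N : Type} (P : N → List (T ⊕ N) → Prop) :
    List (T ⊕ N) → List (T ⊕ N) → Prop :=
  Relation.ReflTransGen (CFStep P)

/-- One leftmost derivation step. -/
inductive LStep {T N : Type} (P : N → List (T ⊕ N) → Prop) :
    List (T ⊕ N) → List (T ⊕ N) → Prop
  | mk (u : List T) (v α : List (T ⊕ N)) (A : N) (h : P A α) :
      LStep P (List.map Sum.inl u ++ Sum.inr A :: v) (List.map Sum.inl u ++ α ++ v)

/-- Multi-step leftmost derivation. -/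
def LDerives {T N : Type} (P : N → List (T ⊕ N) → Prop) :
    List (T ⊕ N) → List (T ⊕ N) → Prop :=
  Relation.ReflTransGen (LStep P)

/-!
If `A ⇒+ Aβ`, look at the first rule `A → α` of the derivation. Since `α ⇒* Aβ`, some nonterminal
of `α`, preceded in `α` only by nullable nonterminals, has a path to `A` in the graph: this
property of a sentential form (`LeftReaches`) holds for `Aβ` and propagates backwards along
derivation steps. Its witness in `α` is the target of an edge out of `A`, closing a cycle.
Conversely, each edge `A → B` is realised by `A ⇒ A₁…AₖBγ ⇒* Bγ`, and these compose along a cycle.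
-/

open Relation

variable {T N : Type} {P : N → List (T ⊕ N) → Prop}

theorem CFStep.append (x y : List (T ⊕ N)) {a b : List (T ⊕ N)} (h : CFStep P a b) :
    CFStep P (x ++ a ++ y) (x ++ b ++ y) := by
  obtain ⟨u, v, α, A, hA⟩ := h
  simpa using CFStep.mk (x ++ u) (v ++ y) α A hA

theorem Derives.append_context (x y : List (T ⊕ N)) {a b : List (T ⊕ N)}
    (h : Derives P a b) : Derives P (x ++ a ++ y) (x ++ b ++ y) :=
  ReflTransGen.lift (fun w => x ++ w ++ y) (fun _ _ => CFStep.append x y) _ _ h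

theorem Derives.append {a b c d : List (T ⊕ N)} (hab : Derives P a b) (hcd : Derives P c d) :
    Derives P (a ++ c) (b ++ d) := by
  have hl := hab.append_context [] c
  have hr := hcd.append_context b []
  simp only [List.nil_append, List.append_nil] at hl hr
  exact hl.trans hr

theorem transGen_cfStep_append_right (y : List (T ⊕ N)) {a b : List (T ⊕ N)}
    (h : TransGen (CFStep P) a b) : TransGen (CFStep P) (a ++ y) (b ++ y) := by
  simpa using TransGen.lift (fun w => [] ++ w ++ y) (fun _ _ => CFStep.append [] y) _ _ h

theorem CFStep.rule_of_singleton {A : N} {α : List (T ⊕ N)} (h : CFStep P [Sum.inr A] α) :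
    P A α := by
  generalize hA : [Sum.inr A] = w at h
  obtain ⟨u, v, β, D, hD⟩ := h
  obtain ⟨⟩ | ⟨_, _⟩ := u
  · simp only [List.nil_append, List.cons.injEq, Sum.inr.injEq] at hA
    obtain ⟨rfl, rfl⟩ := hA
    simpa using hD
  · simp at hA

def Nullable (P : N → List (T ⊕ N) → Prop) (C : N) : Prop :=
  Derives P [Sum.inr C] []

theorem derives_map_inr_nil {As : List N} (h : ∀ C ∈ As, Nullable P C) :
    Derives P (As.map Sum.inr) [] := by
  induction As with
  | nil => exact ReflTransGen.refl
  | cons C As ih =>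
    simp only [List.forall_mem_cons] at h
    exact (h.1.append (ih h.2) : Derives P ([Sum.inr C] ++ _) ([] ++ []))

def LeftEdge (P : N → List (T ⊕ N) → Prop) (A B : N) : Prop :=
  ∃ (As : List N) (γ : List (T ⊕ N)),
    (∀ C ∈ As, Nullable P C) ∧ P A (List.map Sum.inr As ++ Sum.inr B :: γ)

theorem LeftEdge.transGen_cfStep {A B : N} (h : LeftEdge P A B) :
    ∃ γ, TransGen (CFStep P) [Sum.inr A] (Sum.inr B :: γ) := by
  obtain ⟨As, γ, hAs, hA⟩ := h
  refine ⟨γ, TransGen.head' (b := As.map Sum.inr ++ Sum.inr B :: γ) ?_ ?_⟩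
  · simpa using CFStep.mk [] [] _ A hA
  · exact (derives_map_inr_nil hAs).append ReflTransGen.refl

theorem transGen_cfStep_of_transGen_leftEdge {A B : N} (h : TransGen (LeftEdge P) A B) :
    ∃ γ, TransGen (CFStep P) [Sum.inr A] (Sum.inr B :: γ) := by
  induction h with
  | single h => exact h.transGen_cfStep
  | tail _ hBC ih =>
    obtain ⟨γ₁, h₁⟩ := ih
    obtain ⟨γ₂, h₂⟩ := hBC.transGen_cfStep
    exact ⟨γ₂ ++ γ₁, h₁.trans (by simpa using transGen_cfStep_append_right γ₁ h₂)⟩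

inductive LeftReaches (P : N → List (T ⊕ N) → Prop) (B : N) : List (T ⊕ N) → Prop
  | head {C : N} (δ : List (T ⊕ N)) :
      ReflTransGen (LeftEdge P) C B → LeftReaches P B (Sum.inr C :: δ)
  | skip {C : N} {w : List (T ⊕ N)} :
      Nullable P C → LeftReaches P B w → LeftReaches P B (Sum.inr C :: w)

namespace LeftReaches

variable {B : N}

theorem exists_eq {w : List (T ⊕ N)} (h : LeftReaches P B w) :
    ∃ (As : List N) (C : N) (δ : List (T ⊕ N)), w = As.map Sum.inr ++ Sum.inr C :: δ ∧
      (∀ X ∈ As, Nullable P X) ∧ ReflTransGen (LeftEdge P) C B := by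
  induction h with
  | head δ hC => exact ⟨[], _, δ, rfl, by simp, hC⟩
  | @skip X _ hX _ ih =>
    obtain ⟨As, C, δ, rfl, hAs, hC⟩ := ih
    exact ⟨X :: As, C, δ, rfl, List.forall_mem_cons.2 ⟨hX, hAs⟩, hC⟩

theorem of_append {x y : List (T ⊕ N)} (h : LeftReaches P B (x ++ y)) :
    LeftReaches P B x ∨ (Derives P x [] ∧ LeftReaches P B y) := by
  induction x with
  | nil => exact .inr ⟨ReflTransGen.refl, h⟩
  | cons a x ih =>
    rcases h with ⟨_, hC⟩ | ⟨hC, h⟩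
    · exact .inl (.head _ hC)
    · rcases ih h with hx | ⟨hx, hy⟩
      · exact .inl (.skip hC hx)
      · exact .inr ⟨(hC.append hx : Derives P ([_] ++ x) ([] ++ [])), hy⟩

theorem of_cfStep {w w' : List (T ⊕ N)} (hstep : CFStep P w w') (h : LeftReaches P B w') :
    LeftReaches P B w := by
  obtain ⟨u, v, α, D, hD⟩ := hstep
  induction u with
  | nil =>
    rcases of_append (by simpa using h) with hα | ⟨hα, hv⟩
    · obtain ⟨As, C, γ, rfl, hAs, hC⟩ := hα.exists_eq
      exact .head v (.head ⟨As, γ, hAs, hD⟩ hC)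
    · exact .skip (.head (by simpa using CFStep.mk [] [] α D hD) hα) hv
  | cons a u ih =>
    rcases h with ⟨_, hC⟩ | ⟨hC, h⟩
    · exact .head _ hC
    · exact .skip hC (ih h)

theorem of_derives {w : List (T ⊕ N)} {β : List (T ⊕ N)}
    (h : Derives P w (Sum.inr B :: β)) : LeftReaches P B w := by
  induction h using ReflTransGen.head_induction_on with
  | refl => exact .head β .refl
  | head hstep _ ih => exact of_cfStep hstep ih

end LeftReaches

/-- the grammar admits a left-recursive derivation `A ⇒+ Aβ`
iff the graph on nonterminals, with an edge `A → B` whenever there is a rule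
`A → A₁…AₖBγ` with all `A₁,…,Aₖ` nullable, contains a cycle. -/
theorem left_recursion_iff_cycle {T N : Type}
    (P : N → List (T ⊕ N) → Prop) :
    (∃ (A : N) (β : List (T ⊕ N)),
        Relation.TransGen (CFStep P) [Sum.inr A] (Sum.inr A :: β)) ↔
    (∃ A : N, Relation.TransGen
        (fun (A B : N) => ∃ (As : List N) (γ : List (T ⊕ N)),
            (∀ C ∈ As, Derives P [Sum.inr C] []) ∧
            P A (List.map Sum.inr As ++ Sum.inr B :: γ))
        A A) := by
  change _ ↔ ∃ A, TransGen (LeftEdge P) A A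
  constructor
  · rintro ⟨A, β, h⟩
    obtain ⟨α, hAα, hα⟩ := TransGen.head'_iff.mp h
    obtain ⟨As, C, γ, rfl, hAs, hCA⟩ := (LeftReaches.of_derives hα).exists_eq
    exact ⟨A, TransGen.head' ⟨As, γ, hAs, hAα.rule_of_singleton⟩ hCA⟩
  · rintro ⟨A, h⟩
    obtain ⟨β, hβ⟩ := transGen_cfStep_of_transGen_leftEdge h
    exact ⟨A, β, hβ⟩
end

section
/- Let G be an EBNF grammar in which each nonterminal A has exactly one rule A → α with α a regular expression over Σ ∪ V, and let Ĝ be the right-linearized BNF grammar obtained by replacing each machine M_A (a DFA recognizing R(α)) with rules p_A → X r_A for each transition p_A →X r_A (where nonterminals B occurring as labels are replaced by the initial state 0_B) and p_A → ε for final states. Then L(Ĝ) = L(G). -/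
/-- A machine net: one partial DFA over `Σ ∪ V` per nonterminal. -/
structure MachineNet (T N : Type) where
  State : N → Type
  init : ∀ A, State A
  final : ∀ A, Set (State A)
  step : ∀ A, State A → T ⊕ N → Option (State A)
  start : N

/-- The set of all states of the net. -/
abbrev MachineNet.Q {T N : Type} (net : MachineNet T N) : Type :=
  Σ A : N, net.State A

/-- Transition function on the global state set. -/
def MachineNet.stepS {T N : Type} (net : MachineNet T N) (q : net.Q)
    (X : T ⊕ N) : Option net.Q :=
  (net.step q.1 q.2 X).map (fun r => ⟨q.1, r⟩)

def MachineNet.IsFinal {T N : Type} (net : MachineNet T N) (q : net.Q) : Prop :=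
  q.2 ∈ net.final q.1

/-- `Reads net A p w q`: machine `M_A` goes from `p` to `q` reading `w ∈ (Σ ∪ V)*`. -/
inductive MachineNet.Reads {T N : Type} (net : MachineNet T N) (A : N) :
    net.State A → List (T ⊕ N) → net.State A → Prop
  | refl (q : net.State A) : MachineNet.Reads net A q [] q
  | cons {p q r : net.State A} {s : T ⊕ N} {w : List (T ⊕ N)} :
      net.step A p s = some q → MachineNet.Reads net A q w r →
      MachineNet.Reads net A p (s :: w) r

/-- One EBNF derivation step: `u A v ⇒ u w v` with `w` accepted by machine `M_A`. -/
inductive MachineNet.EStep {T N : Type} (net : MachineNet T N) :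
    List (T ⊕ N) → List (T ⊕ N) → Prop
  | mk (u v w : List (T ⊕ N)) (A : N) (f : net.State A) :
      net.Reads A (net.init A) w f → f ∈ net.final A →
      MachineNet.EStep net (u ++ Sum.inr A :: v) (u ++ w ++ v)

def MachineNet.EDerives {T N : Type} (net : MachineNet T N) :
    List (T ⊕ N) → List (T ⊕ N) → Prop :=
  Relation.ReflTransGen net.EStep

/-- The terminal language `L(M_A, q)` recognized from state `q` of machine `M_A`. -/
def MachineNet.TermLang {T N : Type} (net : MachineNet T N) (A : N)
    (q : net.State A) : Set (List T) :=
  {y | ∃ w f, net.Reads A q w f ∧ f ∈ net.final A ∧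
      net.EDerives w (List.map Sum.inl y)}

def MachineNet.TermLangS {T N : Type} (net : MachineNet T N) (q : net.Q) :
    Set (List T) :=
  net.TermLang q.1 q.2

/-- Rules of the right-linearized grammar `Ĝ` of the net. -/
def MachineNet.RLRules {T N : Type} (net : MachineNet T N) :
    net.Q → List (T ⊕ net.Q) → Prop := fun q α =>
  (∃ a r, net.stepS q (Sum.inl a) = some r ∧ α = [Sum.inl a, Sum.inr r]) ∨
  (∃ B r, net.stepS q (Sum.inr B) = some r ∧
      α = [Sum.inr ⟨B, net.init B⟩, Sum.inr r]) ∨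
  (net.IsFinal q ∧ α = [])

/-!
Both inclusions are instances of one principle: if a family of languages `L`, indexed by the
nonterminals of a grammar, satisfies `L(α) ⊆ L A` for every rule `A → α` (with `L(α)` the
concatenation of the languages of the symbols of `α`), then every terminal word derivable from
`A` lies in `L A`, because a derivation step can only shrink `L` of the sentential form.
For `L(Ĝ) ⊆ L(G)` take `L q = L(M_A, q)` at each state `q` of `M_A`: the three kinds of rules of
`Ĝ` are a transition on a terminal, a transition on a nonterminal `B` (whose word comes from
`L(M_B, 0_B)`), and acceptance. For `L(G) ⊆ L(Ĝ)` take `L B = L(Ĝ, 0_B)`; closure under a rule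
`A → w` of `G` follows by induction along the run of `M_A` on `w`, replaying each transition by
the corresponding rule of `Ĝ`.
-/

section FormLanguage

variable {T N : Type}

def symbolLang (L : N → Language T) : T ⊕ N → Language T :=
  Sum.elim (fun a => {[a]}) L

def formLang (L : N → Language T) (γ : List (T ⊕ N)) : Language T :=
  (γ.map (symbolLang L)).prod

variable (L : N → Language T)

@[simp] lemma formLang_nil : formLang L [] = 1 := rfl

@[simp] lemma formLang_cons (s : T ⊕ N) (γ : List (T ⊕ N)) :
    formLang L (s :: γ) = symbolLang L s * formLang L γ :=
  List.prod_cons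

@[simp] lemma formLang_append (γ δ : List (T ⊕ N)) :
    formLang L (γ ++ δ) = formLang L γ * formLang L δ := by
  simp [formLang]

lemma formLang_singleton_inr (A : N) : formLang L [Sum.inr A] = L A := by
  simp [symbolLang]

lemma mem_formLang_map_inl (x : List T) : x ∈ formLang L (x.map Sum.inl) := by
  induction x with
  | nil => exact Language.nil_mem_one
  | cons a x ih => exact Language.append_mem_mul (l := {[a]}) rfl ih

end FormLanguage

section Derivations

variable {T N : Type} {P : N → List (T ⊕ N) → Prop}

lemma Derives.of_rule {A : N} {α : List (T ⊕ N)} (h : P A α) : Derives P [Sum.inr A] α :=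
  .single (by simpa using CFStep.mk (P := P) [] [] α A h)

lemma CFStep.context {x y : List (T ⊕ N)} (s t : List (T ⊕ N)) (h : CFStep P x y) :
    CFStep P (s ++ x ++ t) (s ++ y ++ t) := by
  obtain ⟨u, v, α, A, hα⟩ := h
  simpa using CFStep.mk (s ++ u) (v ++ t) α A hα

lemma Derives.append_s6 {x x' y y' : List (T ⊕ N)} (hx : Derives P x x') (hy : Derives P y y') :
    Derives P (x ++ y) (x' ++ y') := by
  have hx' : Derives P (x ++ y) (x' ++ y) :=
    hx.lift (· ++ y) fun _ _ h => by simpa using h.context [] y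
  have hy' : Derives P (x' ++ y) (x' ++ y') :=
    hy.lift (x' ++ ·) fun _ _ h => by simpa using h.context x' []
  exact hx'.trans hy'

variable {L : N → Language T}

lemma CFStep.formLang_le (hP : ∀ A α, P A α → formLang L α ≤ L A) {γ γ' : List (T ⊕ N)}
    (h : CFStep P γ γ') : formLang L γ' ≤ formLang L γ := by
  obtain ⟨u, v, α, A, hα⟩ := h
  simp only [formLang_append, formLang_cons, symbolLang, Sum.elim_inr, ← mul_assoc]
  gcongr
  exact hP A α hα

lemma Derives.formLang_le (hP : ∀ A α, P A α → formLang L α ≤ L A) {γ γ' : List (T ⊕ N)}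
    (h : Derives P γ γ') : formLang L γ' ≤ formLang L γ := by
  induction h with
  | refl => exact le_rfl
  | tail _ hstep ih => exact (hstep.formLang_le hP).trans ih

lemma Derives.mem_of_rules_le (hP : ∀ A α, P A α → formLang L α ≤ L A) {A : N} {x : List T}
    (h : Derives P [Sum.inr A] (x.map Sum.inl)) : x ∈ L A :=
  formLang_singleton_inr L A ▸ h.formLang_le hP (mem_formLang_map_inl L x)

end Derivations

namespace MachineNet

variable {T N : Type} (net : MachineNet T N)

def ERules (A : N) (w : List (T ⊕ N)) : Prop :=
  ∃ f, net.Reads A (net.init A) w f ∧ f ∈ net.final A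

lemma eDerives_eq_derives : net.EDerives = Derives net.ERules := by
  have hstep : net.EStep = CFStep net.ERules := by
    ext x y
    constructor
    · rintro ⟨u, v, w, A, f, hr, hf⟩
      exact CFStep.mk u v w A ⟨f, hr, hf⟩
    · rintro ⟨u, v, w, A, f, hr, hf⟩
      exact EStep.mk u v w A f hr hf
  rw [EDerives, Derives, hstep]

variable {net}

lemma eDerives_of_mem_termLang {A : N} {y : List T} (h : y ∈ net.TermLang A (net.init A)) :
    net.EDerives [Sum.inr A] (y.map Sum.inl) := by
  obtain ⟨w, f, hr, hf, hd⟩ := h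
  exact .head (by simpa using EStep.mk [] [] w A f hr hf) hd

lemma append_mem_termLang {A : N} {p r : net.State A} {s : T ⊕ N}
    (hst : net.step A p s = some r) {x y : List T} (hx : net.EDerives [s] (x.map Sum.inl))
    (hy : y ∈ net.TermLang A r) : x ++ y ∈ net.TermLang A p := by
  obtain ⟨w, f, hr, hf, hd⟩ := hy
  refine ⟨s :: w, f, .cons hst hr, hf, ?_⟩
  rw [eDerives_eq_derives] at hx hd ⊢
  simpa using hx.append_s6 hd

lemma mem_termLangS_of_rlRules {q : net.Q} {α : List (T ⊕ net.Q)} (h : net.RLRules q α)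
    {x : List T} (hx : x ∈ formLang net.TermLangS α) : x ∈ net.TermLangS q := by
  obtain ⟨A, p⟩ := q
  rcases h with ⟨a, r, hst, rfl⟩ | ⟨B, r, hst, rfl⟩ | ⟨hfin, rfl⟩
  · obtain ⟨r, hr, rfl⟩ := Option.map_eq_some_iff.mp hst
    obtain ⟨_, rfl, _, ⟨y, hy, _, rfl, rfl⟩, rfl⟩ := hx
    simp only [List.append_nil]
    exact append_mem_termLang (x := [a]) hr .refl hy
  · obtain ⟨r, hr, rfl⟩ := Option.map_eq_some_iff.mp hst
    obtain ⟨x, hx, _, ⟨y, hy, _, rfl, rfl⟩, rfl⟩ := hx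
    simp only [List.append_nil]
    exact append_mem_termLang hr (eDerives_of_mem_termLang hx) hy
  · obtain rfl : x = [] := hx
    exact ⟨[], p, .refl p, hfin, .refl⟩

variable (net)

def rlSymbol : T ⊕ N → T ⊕ net.Q :=
  Sum.map id fun B => ⟨B, net.init B⟩

def rlLang (A : N) : Language T :=
  {x | Derives net.RLRules [Sum.inr ⟨A, net.init A⟩] (x.map Sum.inl)}

variable {net}

lemma rlRules_of_step {A : N} {p q : net.State A} {s : T ⊕ N} (h : net.step A p s = some q) :
    net.RLRules ⟨A, p⟩ [net.rlSymbol s, Sum.inr ⟨A, q⟩] := by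
  cases s with
  | inl a => exact .inl ⟨a, _, by simp [stepS, h], rfl⟩
  | inr B => exact .inr (.inl ⟨B, _, by simp [stepS, h], rfl⟩)

lemma derives_rlSymbol {s : T ⊕ N} {x : List T} (hx : x ∈ symbolLang net.rlLang s) :
    Derives net.RLRules [net.rlSymbol s] (x.map Sum.inl) := by
  cases s with
  | inl a => obtain rfl : x = [a] := hx; exact .refl
  | inr B => exact hx

lemma Reads.derives_rlRules {A : N} {p f : net.State A} {w : List (T ⊕ N)}
    (hr : net.Reads A p w f) (hf : f ∈ net.final A) {x : List T}
    (hx : x ∈ formLang net.rlLang w) :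
    Derives net.RLRules [Sum.inr ⟨A, p⟩] (x.map Sum.inl) := by
  induction hr generalizing x with
  | refl p =>
    obtain rfl : x = [] := hx
    exact Derives.of_rule (.inr (.inr ⟨hf, rfl⟩))
  | cons hst _ ih =>
    obtain ⟨x₁, hx₁, x₂, hx₂, rfl⟩ := Language.mem_mul.mp hx
    rw [List.map_append]
    exact (Derives.of_rule (rlRules_of_step hst)).trans
      ((derives_rlSymbol hx₁).append_s6 (ih hf hx₂))

end MachineNet

/-- the right-linearized grammar `Ĝ` of a machine net generates
the same terminal language as the EBNF grammar `G` represented by the net. -/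
theorem right_linearized_equivalent {T N : Type} (net : MachineNet T N) :
    {x : List T | Derives net.RLRules
        [Sum.inr ⟨net.start, net.init net.start⟩] (x.map Sum.inl)} =
    {x : List T | net.EDerives [Sum.inr net.start] (x.map Sum.inl)} := by
  ext x
  constructor
  · intro h
    exact MachineNet.eDerives_of_mem_termLang
      (h.mem_of_rules_le fun _ _ hα _ => MachineNet.mem_termLangS_of_rlRules hα)
  · intro h
    rw [MachineNet.eDerives_eq_derives] at h
    exact h.mem_of_rules_le (L := net.rlLang) fun _ _ ⟨_, hr, hf⟩ _ hx => hr.derives_rlRules hf hx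
end

section
/- (Earley correctness) Let E[0..n] be the Earley vector computed by the Earley algorithm on input x = x₁…xₙ for a machine net with right-linearized grammar Ĝ. If ⟨q_A, j⟩ ∈ E[i] with q_A a state of machine M_A, then j ≤ i, ⟨0_A, j⟩ ∈ E[j], and Ĝ admits a leftmost derivation 0_A ⇒* x_{j+1}…x_i q_A (which is 0_A ⇒* q_A when j = i). -/
/-- The Earley relation: `Earley net x i q j` means `⟨q, j⟩ ∈ E[i]`. -/
inductive MachineNet.Earley {T N : Type} (net : MachineNet T N) (x : List T) :
    ℕ → net.Q → ℕ → Prop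
  | init : MachineNet.Earley net x 0 ⟨net.start, net.init net.start⟩ 0
  | closure {i j : ℕ} {p r : net.Q} {B : N} :
      MachineNet.Earley net x i p j → net.stepS p (Sum.inr B) = some r →
      MachineNet.Earley net x i ⟨B, net.init B⟩ i
  | termShift {i j : ℕ} {p q : net.Q} {a : T} :
      MachineNet.Earley net x i p j → x[i]? = some a →
      net.stepS p (Sum.inl a) = some q →
      MachineNet.Earley net x (i + 1) q j
  | nontermShift {i j l : ℕ} {f p q : net.Q} :
      MachineNet.Earley net x i f j → net.IsFinal f →
      MachineNet.Earley net x j p l →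
      net.stepS p (Sum.inr f.1) = some q →
      MachineNet.Earley net x i q l

theorem LStep.append_context {T N : Type} {P : N → List (T ⊕ N) → Prop} (u : List T)
    (γ : List (T ⊕ N)) {α β : List (T ⊕ N)} (h : LStep P α β) :
    LStep P (u.map Sum.inl ++ α ++ γ) (u.map Sum.inl ++ β ++ γ) := by
  obtain ⟨u', v, α, A, hr⟩ := h
  simpa using LStep.mk (P := P) (u ++ u') (v ++ γ) α A hr

theorem LDerives.append_context {T N : Type} {P : N → List (T ⊕ N) → Prop} (u : List T)
    (γ : List (T ⊕ N)) {α β : List (T ⊕ N)} (h : LDerives P α β) :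
    LDerives P (u.map Sum.inl ++ α ++ γ) (u.map Sum.inl ++ β ++ γ) :=
  Relation.ReflTransGen.lift (fun s => u.map Sum.inl ++ s ++ γ)
    (fun _ _ => LStep.append_context u γ) _ _ h

theorem List.drop_take_add_one_of_getElem? {α : Type*} {x : List α} {i j : ℕ} {a : α}
    (hji : j ≤ i) (ha : x[i]? = some a) :
    (x.take (i + 1)).drop j = (x.take i).drop j ++ [a] := by
  obtain ⟨hi, -⟩ := List.getElem?_eq_some_iff.mp ha
  rw [List.take_add_one, ha, Option.toList_some,
    List.drop_append_of_le_length (by simp; omega)]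

theorem List.drop_take_append_drop_of_le {α : Type*} (y : List α) {j l : ℕ} (h : l ≤ j) :
    (y.take j).drop l ++ y.drop j = y.drop l := by
  rw [List.drop_take]
  simpa [Nat.add_sub_cancel' h] using List.drop_take_append_drop y l (j - l)

namespace MachineNet

variable {T N : Type} {net : MachineNet T N}

/-- `net.Generates q w` is the paper's `0_A ⇒* w q` in `Ĝ`, where `q` is a state of `M_A`. -/
def Generates (net : MachineNet T N) (q : net.Q) (w : List T) : Prop :=
  LDerives net.RLRules [Sum.inr (⟨q.1, net.init q.1⟩ : net.Q)] (w.map Sum.inl ++ [Sum.inr q])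

theorem stepS_fst {q r : net.Q} {X : T ⊕ N} (h : net.stepS q X = some r) : r.1 = q.1 := by
  obtain ⟨s, -, rfl⟩ := Option.map_eq_some_iff.mp h
  rfl

theorem generates_init (A : N) : net.Generates ⟨A, net.init A⟩ [] :=
  Relation.ReflTransGen.refl

theorem Generates.terminal_shift {p q : net.Q} {w : List T} {a : T} (hp : net.Generates p w)
    (hpq : net.stepS p (Sum.inl a) = some q) : net.Generates q (w ++ [a]) := by
  have shift : net.RLRules p [Sum.inl a, Sum.inr q] := Or.inl ⟨a, q, hpq, rfl⟩
  unfold Generates LDerives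
  rw [stepS_fst hpq]
  simpa using hp.tail (LStep.mk w [] _ p shift)

theorem Generates.nonterminal_shift {f p q : net.Q} {u w : List T} (hp : net.Generates p u)
    (hf : net.Generates f w) (hfin : net.IsFinal f) (hpq : net.stepS p (Sum.inr f.1) = some q) :
    net.Generates q (u ++ w) := by
  have call : net.RLRules p [Sum.inr ⟨f.1, net.init f.1⟩, Sum.inr q] :=
    Or.inr (Or.inl ⟨f.1, q, hpq, rfl⟩)
  have ret : net.RLRules f [] := Or.inr (Or.inr ⟨hfin, rfl⟩)
  have hcall := hp.tail (LStep.mk u [] _ p call)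
  have hbody := LDerives.append_context u [Sum.inr q] hf
  have hret := LStep.mk (u ++ w) [Sum.inr q] [] f ret
  unfold Generates LDerives
  rw [stepS_fst hpq]
  simp only [List.append_nil, List.map_append, List.append_assoc] at hcall hbody hret ⊢
  exact (hcall.trans hbody).tail hret

theorem Earley.sound {x : List T} {i j : ℕ} {q : net.Q} (h : net.Earley x i q j) :
    j ≤ i ∧ net.Earley x j ⟨q.1, net.init q.1⟩ j ∧ net.Generates q ((x.take i).drop j) := by
  induction h with
  | init => exact ⟨le_rfl, .init, by simpa using generates_init _⟩
  | closure hp hpr => exact ⟨le_rfl, .closure hp hpr, by simpa using generates_init _⟩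
  | termShift _ ha hpq ih =>
    obtain ⟨hji, hinit, hgen⟩ := ih
    refine ⟨by omega, stepS_fst hpq ▸ hinit, ?_⟩
    rw [List.drop_take_add_one_of_getElem? hji ha]
    exact hgen.terminal_shift hpq
  | nontermShift _ hfin _ hpq ihf ihp =>
    obtain ⟨hji, -, hf⟩ := ihf
    obtain ⟨hlj, hinit, hp⟩ := ihp
    refine ⟨hlj.trans hji, stepS_fst hpq ▸ hinit, ?_⟩
    rw [← List.drop_take_append_drop_of_le _ hlj, List.take_take, min_eq_left hji]
    exact hp.nonterminal_shift hf hfin hpq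

end MachineNet

/-- Earley correctness: if `⟨q_A, j⟩ ∈ E[i]` then `j ≤ i`,
`⟨0_A, j⟩ ∈ E[j]`, and `Ĝ` admits a leftmost derivation
`0_A ⇒* x_{j+1}…x_i q_A`. -/
theorem earley_correctness {T N : Type} (net : MachineNet T N) (x : List T)
    {i j : ℕ} {A : N} {q : net.State A}
    (h : net.Earley x i ⟨A, q⟩ j) :
    j ≤ i ∧ net.Earley x j ⟨A, net.init A⟩ j ∧
    LDerives net.RLRules [Sum.inr (⟨A, net.init A⟩ : net.Q)]
      (((x.take i).drop j).map Sum.inl ++ [Sum.inr (⟨A, q⟩ : net.Q)]) :=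
  h.sound
end

section
/- (Earley acceptance soundness) If the Earley vector for input x of length n contains a pair ⟨f, 0⟩ ∈ E[n] with f a final state of the axiom machine M_S, then x ∈ L(G). -/
/-!
Every Earley item `⟨q, j⟩ ∈ E[i]` of a machine `M_A` is sound: `M_A` reaches `q` from its
initial state by reading a word over `Σ ∪ V` that derives the input segment `x[j..i)`.
Closure starts such a word empty, a terminal shift extends it by the scanned letter, and a
nonterminal shift by `B` appends `B`, which one step rewrites into the word of the completed
item of `M_B`, whose derivation covers the adjacent segment. For an accepting item `⟨f, 0⟩ ∈ E[n]`
of `M_S`, one more step `S ⇒ w` in front gives `S ⇒+ x`.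
-/

theorem List.drop_take_append_drop_take {α : Type*} (x : List α) {l j i : ℕ} (hlj : l ≤ j)
    (hji : j ≤ i) : (x.take j).drop l ++ (x.take i).drop j = (x.take i).drop l := by
  have htake : x.take j = (x.take i).take j := by rw [List.take_take, min_eq_left hji]
  obtain ⟨k, rfl⟩ := Nat.exists_eq_add_of_le hlj
  rw [htake, List.drop_take, Nat.add_sub_cancel_left, List.drop_take_append_drop]

namespace MachineNet

variable {T N : Type} {net : MachineNet T N}

theorem Reads.snoc {A : N} {p q r : net.State A} {w : List (T ⊕ N)} {s : T ⊕ N}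
    (h : net.Reads A p w q) (hs : net.step A q s = some r) : net.Reads A p (w ++ [s]) r := by
  induction h with
  | refl q => exact .cons hs (.refl _)
  | cons hp _ ih => exact .cons hp (ih hs)

theorem stepS_eq_some {q r : net.Q} {X : T ⊕ N} (h : net.stepS q X = some r) :
    ∃ s, net.step q.1 q.2 X = some s ∧ r = ⟨q.1, s⟩ := by
  obtain ⟨s, hs, rfl⟩ := Option.map_eq_some_iff.mp h
  exact ⟨s, hs, rfl⟩

theorem EStep.append_context {a b : List (T ⊕ N)} (h : net.EStep a b) (u v : List (T ⊕ N)) :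
    net.EStep (u ++ a ++ v) (u ++ b ++ v) := by
  obtain ⟨u', v', w, A, f, hr, hf⟩ := h
  simpa only [List.append_assoc, List.cons_append] using
    EStep.mk (u ++ u') (v' ++ v) w A f hr hf

theorem EDerives.append_context {a b : List (T ⊕ N)} (h : net.EDerives a b)
    (u v : List (T ⊕ N)) : net.EDerives (u ++ a ++ v) (u ++ b ++ v) :=
  Relation.ReflTransGen.lift (fun c => u ++ c ++ v) (fun _ _ hs => hs.append_context u v) _ _ h

theorem EDerives.append {a a' b b' : List (T ⊕ N)} (ha : net.EDerives a a')
    (hb : net.EDerives b b') : net.EDerives (a ++ b) (a' ++ b') := by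
  have hleft := ha.append_context [] b
  have hright := hb.append_context a' []
  simp only [List.nil_append, List.append_nil] at hleft hright
  exact hleft.trans hright

def PrefixDerives (net : MachineNet T N) (q : net.Q) (u : List T) : Prop :=
  ∃ w, net.Reads q.1 (net.init q.1) w q.2 ∧ net.EDerives w (u.map Sum.inl)

theorem prefixDerives_init (A : N) : net.PrefixDerives ⟨A, net.init A⟩ [] :=
  ⟨[], .refl _, .refl⟩

theorem PrefixDerives.termShift {p q : net.Q} {u : List T} {a : T} (hp : net.PrefixDerives p u)
    (hstep : net.stepS p (Sum.inl a) = some q) : net.PrefixDerives q (u ++ [a]) := by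
  obtain ⟨w, hr, hd⟩ := hp
  obtain ⟨s, hs, rfl⟩ := stepS_eq_some hstep
  refine ⟨w ++ [Sum.inl a], hr.snoc hs, ?_⟩
  simpa only [List.map_append, List.map_cons, List.map_nil] using hd.append .refl

theorem PrefixDerives.estep_of_isFinal {f : net.Q} {v : List T} (hf : net.PrefixDerives f v)
    (hfin : net.IsFinal f) :
    ∃ w, net.EStep [Sum.inr f.1] w ∧ net.EDerives w (v.map Sum.inl) := by
  obtain ⟨w, hr, hd⟩ := hf
  exact ⟨w, by simpa using EStep.mk [] [] w f.1 f.2 hr hfin, hd⟩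

theorem PrefixDerives.nontermShift {f p q : net.Q} {u v : List T} (hp : net.PrefixDerives p u)
    (hf : net.PrefixDerives f v) (hfin : net.IsFinal f)
    (hstep : net.stepS p (Sum.inr f.1) = some q) : net.PrefixDerives q (u ++ v) := by
  obtain ⟨w, hr, hd⟩ := hp
  obtain ⟨wf, hstepf, hdf⟩ := hf.estep_of_isFinal hfin
  obtain ⟨s, hs, rfl⟩ := stepS_eq_some hstep
  refine ⟨w ++ [Sum.inr f.1], hr.snoc hs, .head ?_ (List.map_append ▸ hd.append hdf)⟩
  simpa only [List.append_nil] using hstepf.append_context w []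

theorem Earley.origin_le {x : List T} {i j : ℕ} {q : net.Q} (h : net.Earley x i q j) :
    j ≤ i := by
  induction h <;> omega

theorem Earley.prefixDerives {x : List T} {i j : ℕ} {q : net.Q} (h : net.Earley x i q j) :
    net.PrefixDerives q ((x.take i).drop j) := by
  induction h with
  | init => simpa using prefixDerives_init net.start
  | closure => simpa using prefixDerives_init _
  | @termShift i j p q a hp hx hstep ih =>
    have hslice : (x.take (i + 1)).drop j = (x.take i).drop j ++ [a] := by
      rw [List.take_add_one, hx, Option.toList_some,
        List.drop_append_of_le_length (by
          simp [hp.origin_le, (List.getElem?_eq_some_iff.mp hx).1.le])]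
    exact hslice ▸ ih.termShift hstep
  | nontermShift hf hfin hp hstep ihf ihp =>
    rw [← List.drop_take_append_drop_take x hp.origin_le hf.origin_le]
    exact ihp.nontermShift ihf hfin hstep

end MachineNet

/-- Earley acceptance soundness: if `⟨f, 0⟩ ∈ E[n]` with `f`
final in the axiom machine, then `x ∈ L(G)`, i.e. `S ⇒+ x`. -/
theorem earley_soundness {T N : Type} (net : MachineNet T N) (x : List T)
    (f : net.State net.start) (hf : f ∈ net.final net.start)
    (h : net.Earley x x.length ⟨net.start, f⟩ 0) :
    Relation.TransGen net.EStep [Sum.inr net.start] (x.map Sum.inl) := by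
  have hsound := h.prefixDerives
  rw [List.take_length, List.drop_zero] at hsound
  obtain ⟨w, hstep, hd⟩ := hsound.estep_of_isFinal hf
  exact .head' hstep hd
end
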